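/- arXiv:math/9911088 — 2 statements merged into one kernel-verified Lean document; each statement's English description precedes it below -/
import Mathlib

section
/- Let f be a polynomial in n+1 variables X₁, …, Xₙ, L over ℂ such that for every nonzero z ∈ ℂ, substituting z·Xᵢ for each Xᵢ and z⁻¹·L for L leaves f unchanged as a polynomial. Then f lies in the ℂ-subalgebra generated by the n products X₁L, X₂L, …, XₙL. (The ring of invariants for the ℂ^×-action of weight 1 on the xᵢ and weight −1 on l is ℂ[x₁l, …, xₙl], whose Proj is ℂℙ^{n−1}.) -/
/-!
Substituting `Xᵢ ↦ 2 Xᵢ`, `L ↦ 2⁻¹ L` multiplies the coefficient of `X^d` by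
`2 ^ (d₁ + ⋯ + dₙ - d_L)`, and `k ↦ 2 ^ k` is injective on `ℤ`. So an invariant `f` only has
monomials with `d₁ + ⋯ + dₙ = d_L`, and each of these is `∏ᵢ (Xᵢ L) ^ dᵢ`.
-/

open MvPolynomial Finset

theorem zpow_sum₀ {ι G₀ : Type*} [CommGroupWithZero G₀] {z : G₀} (hz : z ≠ 0) (s : Finset ι)
    (f : ι → ℤ) : z ^ (∑ i ∈ s, f i) = ∏ i ∈ s, z ^ f i := by
  classical
  induction s using Finset.induction_on with
  | empty => simp
  | insert a s ha ih => rw [sum_insert ha, prod_insert ha, zpow_add₀ hz, ih]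

namespace MvPolynomial

variable {R σ : Type*} [CommSemiring R]

theorem aeval_C_mul_X_monomial (c : σ → R) (d : σ →₀ ℕ) (a : R) :
    aeval (fun i => C (c i) * X i) (monomial d a)
      = monomial d (d.prod (fun i k => c i ^ k) * a) := by
  rw [aeval_monomial, algebraMap_eq, monomial_eq]
  simp_rw [mul_pow, ← C_pow]
  rw [Finsupp.prod_mul, ← map_finsuppProd C, C_mul]
  ring

theorem coeff_aeval_C_mul_X (c : σ → R) (f : MvPolynomial σ R) (d : σ →₀ ℕ) :
    coeff d (aeval (fun i => C (c i) * X i) f) = d.prod (fun i k => c i ^ k) * coeff d f := by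
  classical
  induction f using MvPolynomial.induction_on' with
  | monomial d' a =>
    rw [aeval_C_mul_X_monomial, coeff_monomial, coeff_monomial]
    split_ifs with h
    · rw [h]
    · rw [mul_zero]
  | add p q hp hq => rw [map_add, coeff_add, coeff_add, hp, hq, mul_add]

theorem isWeightedHomogeneous_zero_of_aeval_C_zpow_mul_X_eq_self {K : Type*} [Field K] {z : K}
    (hz : Function.Injective fun k : ℤ => z ^ k) (w : σ → ℤ) {f : MvPolynomial σ K}
    (hf : aeval (fun i => C (z ^ w i) * X i) f = f) : IsWeightedHomogeneous w f 0 := by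
  intro d hd
  have hz0 : z ≠ 0 := by
    rintro rfl
    exact absurd (@hz 1 2 (by simp)) (by norm_num)
  have hscale : d.prod (fun i k => (z ^ w i) ^ k) = z ^ Finsupp.weight w d := by
    rw [Finsupp.weight_apply, Finsupp.sum, zpow_sum₀ hz0]
    refine prod_congr rfl fun i _ => ?_
    dsimp only
    rw [← zpow_natCast, ← zpow_mul, nsmul_eq_mul, mul_comm]
  have hcoeff := congrArg (coeff d) hf
  rw [coeff_aeval_C_mul_X, hscale] at hcoeff
  exact hz (by simpa using mul_right_cancel₀ hd (hcoeff.trans (one_mul _).symm))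

theorem weight_ite_lt_eq_sum_castSucc_sub_last {n : ℕ} (d : Fin (n + 1) →₀ ℕ) :
    Finsupp.weight (fun i : Fin (n + 1) => if (i : ℕ) < n then (1 : ℤ) else -1) d
      = ∑ i : Fin n, (d i.castSucc : ℤ) - d (Fin.last n) := by
  rw [Finsupp.weight_apply, Finsupp.sum_fintype _ _ (by simp), Fin.sum_univ_castSucc]
  simp [sub_eq_add_neg]

theorem monomial_one_eq_prod_X_castSucc_mul_X_last_pow {n : ℕ} {d : Fin (n + 1) →₀ ℕ}
    (hd : ∑ i : Fin n, d i.castSucc = d (Fin.last n)) :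
    monomial d (1 : R) = ∏ i : Fin n, (X i.castSucc * X (Fin.last n)) ^ d i.castSucc := by
  rw [monomial_eq, C_1, one_mul, Finsupp.prod_pow, Fin.prod_univ_castSucc, ← hd,
    ← prod_pow_eq_pow_sum, ← prod_mul_distrib]
  simp_rw [mul_pow]

theorem monomial_mem_adjoin_X_castSucc_mul_X_last {n : ℕ} {d : Fin (n + 1) →₀ ℕ}
    (hd : ∑ i : Fin n, d i.castSucc = d (Fin.last n)) (a : R) :
    monomial d a ∈ Algebra.adjoin R
      {p : MvPolynomial (Fin (n + 1)) R | ∃ i : Fin n, p = X i.castSucc * X (Fin.last n)} := by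
  rw [← mul_one a, ← smul_eq_mul, ← smul_monomial,
    monomial_one_eq_prod_X_castSucc_mul_X_last_pow hd]
  refine Subalgebra.smul_mem _ (Subalgebra.prod_mem _ fun i _ => Subalgebra.pow_mem _ ?_ _) _
  exact Algebra.subset_adjoin (Set.mem_ofPred.mpr ⟨i, rfl⟩)

end MvPolynomial

/-- Let `f ∈ ℂ[X₁, …, Xₙ, L]` (the last variable of `Fin (n+1)` playing the role of `L`)
be invariant under the substitution `Xᵢ ↦ z Xᵢ`, `L ↦ z⁻¹ L` for every nonzero `z ∈ ℂ`.
Then `f` lies in the subalgebra generated by the products `X₁L, …, XₙL`: the invariant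
ring for this `ℂˣ`-action is `ℂ[x₁ l, …, xₙ l]`, whose `Proj` is `ℂℙ^{n-1}`. -/
theorem weight_invariants_generated_by_products (n : ℕ)
    (f : MvPolynomial (Fin (n + 1)) ℂ)
    (hf : ∀ z : ℂ, z ≠ 0 →
        aeval (fun i : Fin (n + 1) =>
            if (i : ℕ) < n then C z * X i else C z⁻¹ * X i) f = f) :
    f ∈ Algebra.adjoin ℂ
        {p : MvPolynomial (Fin (n + 1)) ℂ |
          ∃ i : Fin n, p = X i.castSucc * X (Fin.last n)} := by
  set w : Fin (n + 1) → ℤ := fun i => if (i : ℕ) < n then 1 else -1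
  have two_zpow_injective : Function.Injective fun k : ℤ => (2 : ℂ) ^ k := fun a b h =>
    zpow_right_injective₀ (a := (2 : ℝ)) (by norm_num) (by norm_num)
      (by simpa using congrArg norm h)
  have hinv : aeval (fun i => C ((2 : ℂ) ^ w i) * X i) f = f := by
    convert hf 2 two_ne_zero using 4 with i
    split_ifs <;> simp [w, *]
  have hhom := isWeightedHomogeneous_zero_of_aeval_C_zpow_mul_X_eq_self two_zpow_injective w hinv
  rw [f.as_sum]
  refine Subalgebra.sum_mem _ fun d hd => monomial_mem_adjoin_X_castSucc_mul_X_last ?_ _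
  have hweight := hhom (mem_support_iff.mp hd)
  rw [weight_ite_lt_eq_sum_castSucc_sub_last, sub_eq_zero] at hweight
  exact_mod_cast hweight
end

section
/- Let V be a vector space over ℂ (or any field), let k ≥ 1, and let (v₁, …, v_k) and (w₁, …, w_k) be two linearly independent families in V. If the wedge products satisfy v₁ ∧ ⋯ ∧ v_k = c • (w₁ ∧ ⋯ ∧ w_k) in the k-th exterior power ⋀ᵏ V for some scalar c, then span{v₁, …, v_k} = span{w₁, …, w_k}. (The Plücker embedding of the Grassmannian of k-planes into ℙ(⋀ᵏ ℂⁿ) is well defined and injective.) -/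
/-!
A wedge `w₁ ∧ ⋯ ∧ w_k` of independent vectors is nonzero, so `u ∧ w₁ ∧ ⋯ ∧ w_k` vanishes exactly
when `u` lies in the span of the `wᵢ`. Each `vᵢ` kills `v₁ ∧ ⋯ ∧ v_k = c • (w₁ ∧ ⋯ ∧ w_k)` with
`c ≠ 0`, hence lies in the span of the `wᵢ`; by symmetry the two spans coincide.
-/

open Submodule

namespace ExteriorAlgebra

theorem ι_mul_ιMulti {R M : Type*} [CommRing R] [AddCommGroup M] [Module R M] {n : ℕ}
    (m : M) (f : Fin n → M) : ι R m * ιMulti R n f = ιMulti R (n + 1) (Fin.cons m f) := by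
  rw [ιMulti_succ_apply, Fin.cons_zero]
  rfl

theorem ι_mul_ιMulti_apply_self {R M : Type*} [CommRing R] [AddCommGroup M] [Module R M]
    {n : ℕ} (f : Fin n → M) (i : Fin n) : ι R (f i) * ιMulti R n f = 0 := by
  rw [ι_mul_ιMulti]
  exact (ιMulti R (n + 1)).map_eq_zero_of_eq _ (i := 0) (j := i.succ) rfl
    (Fin.succ_ne_zero i).symm

variable {K V : Type*} [Field K] [AddCommGroup V] [Module K V] {n : ℕ}

theorem ιMulti_ne_zero_of_linearIndependent {f : Fin n → V} (hf : LinearIndependent K f) :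
    ιMulti K n f ≠ 0 := by
  have := (exteriorPower.ιMulti_family_linearIndependent_field (n := n) hf).ne_zero
    (Set.powersetCard.ofFinEmbEquiv (OrderIso.refl (Fin n)).toOrderEmbedding)
  rw [exteriorPower.ιMulti_family, Equiv.symm_apply_apply] at this
  exact fun h0 => this (Subtype.ext h0)

theorem mem_span_of_ι_mul_ιMulti_eq_zero {w : Fin n → V} (hw : LinearIndependent K w) {u : V}
    (h : ι K u * ιMulti K n w = 0) : u ∈ span K (Set.range w) := by
  by_contra hu
  rw [ι_mul_ιMulti] at h
  exact ιMulti_ne_zero_of_linearIndependent (linearIndependent_finCons.2 ⟨hw, hu⟩) h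

theorem span_range_le_of_ιMulti_eq_smul {v w : Fin n → V} (hw : LinearIndependent K w) {c : K}
    (hc : c ≠ 0) (h : ιMulti K n v = c • ιMulti K n w) :
    span K (Set.range v) ≤ span K (Set.range w) := by
  refine span_le.2 (Set.range_subset_iff.2 fun i => mem_span_of_ι_mul_ιMulti_eq_zero hw ?_)
  have hvi := ι_mul_ιMulti_apply_self (R := K) v i
  rwa [h, mul_smul_comm, smul_eq_zero, or_iff_right hc] at hvi

end ExteriorAlgebra

open ExteriorAlgebra

theorem plucker_injective_general {K V : Type*} [Field K] [AddCommGroup V] [Module K V]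
    (k : ℕ) (v w : Fin k → V)
    (hv : LinearIndependent K v) (hw : LinearIndependent K w) (c : K)
    (h : ExteriorAlgebra.ιMulti K k v = c • ExteriorAlgebra.ιMulti K k w) :
    Submodule.span K (Set.range v) = Submodule.span K (Set.range w) := by
  have hc : c ≠ 0 := by
    rintro rfl
    exact ιMulti_ne_zero_of_linearIndependent hv (by rw [h, zero_smul])
  have h' : ιMulti K k w = c⁻¹ • ιMulti K k v := by rw [h, smul_smul, inv_mul_cancel₀ hc, one_smul]
  exact le_antisymm (span_range_le_of_ιMulti_eq_smul hw hc h)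
    (span_range_le_of_ιMulti_eq_smul hv (inv_ne_zero hc) h')

/-- **Injectivity of the Plücker embedding.**  If two linearly independent `k`-tuples
`v` and `w` in a vector space `V` over a field have proportional wedge products
`v₁ ∧ ⋯ ∧ v_k = c • (w₁ ∧ ⋯ ∧ w_k)`, then they span the same `k`-dimensional subspace. -/
theorem plucker_injective {K V : Type*} [Field K] [AddCommGroup V] [Module K V]
    (k : ℕ) (hk : 1 ≤ k) (v w : Fin k → V)
    (hv : LinearIndependent K v) (hw : LinearIndependent K w) (c : K)
    (h : ExteriorAlgebra.ιMulti K k v = c • ExteriorAlgebra.ιMulti K k w) :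
    Submodule.span K (Set.range v) = Submodule.span K (Set.range w) :=
  plucker_injective_general k v w hv hw c h
end
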